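/- In every congestion game, every sequence of improvement steps is finite; that is, there is no infinite sequence of states s^0, s^1, s^2, … in which each state s^{k+1} is obtained from s^k by some player i unilaterally changing his strategy so that c_i(s^{k+1}) < c_i(s^k). -/

import Mathlib

open Finset

/-- In a congestion game, the number of players using resource `r` in state `s`. -/
def usage {n : ℕ} {R : Type*} [Fintype R] [DecidableEq R]
    (s : Fin n → Finset R) (r : R) : ℕ :=
  (Finset.univ.filter (fun j : Fin n => r ∈ s j)).card

/-- The cost of player `i` in state `s`: `c_i(s) = ∑_{r ∈ s_i} d_r(f_s(r))`. -/
def cost {n : ℕ} {R : Type*} [Fintype R] [DecidableEq R]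
    (d : R → ℕ → ℕ) (i : Fin n) (s : Fin n → Finset R) : ℕ :=
  ∑ r ∈ s i, d r (usage s r)

/-- Rosenthal's potential function: `Φ(s) = ∑_{r ∈ R} ∑_{k=1}^{f_s(r)} d_r(k)`. -/
def potential {n : ℕ} {R : Type*} [Fintype R] [DecidableEq R]
    (d : R → ℕ → ℕ) (s : Fin n → Finset R) : ℕ :=
  ∑ r : R, ∑ k ∈ Finset.Icc 1 (usage s r), d r k

/-! Rosenthal's potential is an exact potential: when a single player deviates, the potential
changes by exactly the change of that player's cost, because on a resource `r` used by `a`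
other players, the term `d r (a + 1)` that the deviator adds to or removes from the potential
is exactly the delay he starts or stops paying there. Along an improvement sequence the
natural-number potential would therefore decrease strictly forever. -/

theorem Finset.sum_Icc_one_add_ite_comm {M : Type*} [AddCommMonoid M] (f : ℕ → M)
    {p q : Prop} [Decidable p] [Decidable q] {a u v : ℕ}
    (hu : u = a + if p then 1 else 0) (hv : v = a + if q then 1 else 0) :
    ∑ k ∈ Icc 1 v, f k + (if p then f u else 0) = ∑ k ∈ Icc 1 u, f k + (if q then f v else 0) := by
  subst hu hv
  split_ifs <;> simp [sum_Icc_succ_top, add_comm]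

section CongestionGame

variable {n : ℕ} {R : Type*} [Fintype R] [DecidableEq R]

theorem usage_eq_card_add_ite (s : Fin n → Finset R) (i : Fin n) (r : R) :
    usage s r = #{j ∈ univ.erase i | r ∈ s j} + if r ∈ s i then 1 else 0 := by
  rw [usage, card_filter, card_filter, ← sum_erase_add univ _ (mem_univ i)]

theorem cost_eq_sum_ite (d : R → ℕ → ℕ) (i : Fin n) (s : Fin n → Finset R) :
    cost d i s = ∑ r, if r ∈ s i then d r (usage s r) else 0 := by
  rw [cost, sum_ite_mem, univ_inter]

theorem potential_add_cost_eq_of_forall_ne (d : R → ℕ → ℕ) {i : Fin n}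
    {s s' : Fin n → Finset R} (h : ∀ j, j ≠ i → s' j = s j) :
    potential d s' + cost d i s = potential d s + cost d i s' := by
  rw [cost_eq_sum_ite, cost_eq_sum_ite, potential, potential, ← sum_add_distrib,
    ← sum_add_distrib]
  refine sum_congr rfl fun r _ => ?_
  have others_eq : #{j ∈ univ.erase i | r ∈ s' j} = #{j ∈ univ.erase i | r ∈ s j} :=
    congrArg card <| filter_congr fun j hj => by rw [h j (ne_of_mem_erase hj)]
  exact sum_Icc_one_add_ite_comm (d r) (usage_eq_card_add_ite s i r)
    (others_eq ▸ usage_eq_card_add_ite s' i r)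

theorem potential_lt_of_cost_lt (d : R → ℕ → ℕ) {i : Fin n} {s s' : Fin n → Finset R}
    (h : ∀ j, j ≠ i → s' j = s j) (hcost : cost d i s' < cost d i s) :
    potential d s' < potential d s := by
  have := potential_add_cost_eq_of_forall_ne d h
  omega

end CongestionGame

theorem congestionGame_improvement_sequences_finite_general {n : ℕ} {R : Type*}
    [Fintype R] [DecidableEq R]
    (Strat : Fin n → Finset (Finset R)) (d : R → ℕ → ℕ) :
    ¬ ∃ seq : ℕ → (Fin n → Finset R),
        (∀ k i, seq k i ∈ Strat i) ∧
        ∀ k : ℕ, ∃ i : Fin n,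
          (∀ j, j ≠ i → seq (k + 1) j = seq k j) ∧
          cost d i (seq (k + 1)) < cost d i (seq k) := by
  rintro ⟨seq, -, improves⟩
  obtain ⟨k, hk⟩ := WellFounded.not_rel_apply_succ (r := (· < ·)) (potential d ∘ seq)
  obtain ⟨i, unilateral, hcost⟩ := improves k
  exact hk (potential_lt_of_cost_lt d unilateral hcost)

/-- In every congestion game, every sequence of improvement steps is finite: there
is no infinite sequence of states in which each successive state is obtained from
the previous one by a single player unilaterally changing his strategy so as to
strictly decrease his own cost. -/
theorem congestionGame_improvement_sequences_finite {n : ℕ} {R : Type*}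
    [Fintype R] [DecidableEq R]
    (Strat : Fin n → Finset (Finset R)) (d : R → ℕ → ℕ) (hd : ∀ r, Monotone (d r)) :
    ¬ ∃ seq : ℕ → (Fin n → Finset R),
        (∀ k i, seq k i ∈ Strat i) ∧
        ∀ k : ℕ, ∃ i : Fin n,
          (∀ j, j ≠ i → seq (k + 1) j = seq k j) ∧
          cost d i (seq (k + 1)) < cost d i (seq k) :=
  congestionGame_improvement_sequences_finite_general Strat d
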